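/- Corollary 3.5: Let (X,μ) be an irreducible BRW on a finite set X satisfying Assumption 1, with generating function G and global extinction vector q̄. Then every z ∈ [0,1]^X with z ≥ q̄ (pointwise) and G(z) ≥ z (pointwise) satisfies z = q̄ or z = 1 (the constant vector 1); in particular there are at most two such solutions. -/
import Mathlib


open Filter

/-- The generating function of a (discrete-time) branching random walk. -/
noncomputable def brwGF {X : Type*} (μ : X → (X →₀ ℕ) → ℝ) (z : X → ℝ) (x : X) : ℝ :=
  ∑' f : X →₀ ℕ, μ x f * ∏ y ∈ f.support, z y ^ f y

/-- The first-moment matrix of a BRW: `m_{xy} = Σ_f f(y) μ_x(f)`. -/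
noncomputable def brwM {X : Type*} (μ : X → (X →₀ ℕ) → ℝ) (x y : X) : ℝ :=
  ∑' f : X →₀ ℕ, μ x f * (f y : ℝ)

/-- `x → y`: there is a finite (possibly empty) path along edges with positive
first-moment entries. -/
def brwReach {X : Type*} (μ : X → (X →₀ ℕ) → ℝ) : X → X → Prop :=
  Relation.ReflTransGen fun a b => 0 < brwM μ a b

/-- `x ⇌ y`: `x → y` and `y → x`. -/
def brwComm {X : Type*} (μ : X → (X →₀ ℕ) → ℝ) (x y : X) : Prop :=
  brwReach μ x y ∧ brwReach μ y x

open Classical in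
/-- Assumption 1: in every irreducibility class there is a vertex where a particle
can have, inside the class, a number of children different from one wpp. -/
def brwAssumption1 {X : Type*} (μ : X → (X →₀ ℕ) → ℝ) : Prop :=
  ∀ x : X, ∃ y : X, brwComm μ y x ∧
    (∑' f : {f : X →₀ ℕ //
        (∑ w ∈ f.support, if brwComm μ w y then f w else 0) = 1}, μ y f.val) < 1

section Basic
variable {X : Type*} (μ : X → (X →₀ ℕ) → ℝ)

/-- abbreviation for the product term -/
noncomputable def brwP (z : X → ℝ) (f : X →₀ ℕ) : ℝ := ∏ y ∈ f.support, z y ^ f y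

lemma brwGF_eq (z : X → ℝ) (x : X) : brwGF μ z x = ∑' f, μ x f * brwP z f := rfl

variable {μ}

lemma brw_summable (hμ0 : ∀ x f, 0 ≤ μ x f) (hμ1 : ∀ x, ∑' f, μ x f = 1) (x : X) :
    Summable (μ x) := by
  by_contra h
  have := hμ1 x
  rw [tsum_eq_zero_of_not_summable h] at this
  exact zero_ne_one this

lemma brwP_nonneg {z : X → ℝ} (hz : ∀ y, 0 ≤ z y) (f : X →₀ ℕ) : 0 ≤ brwP z f :=
  Finset.prod_nonneg fun y _ => pow_nonneg (hz y) _

lemma brwP_le_one {z : X → ℝ} (hz0 : ∀ y, 0 ≤ z y) (hz1 : ∀ y, z y ≤ 1) (f : X →₀ ℕ) :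
    brwP z f ≤ 1 :=
  Finset.prod_le_one (fun y _ => pow_nonneg (hz0 y) _)
    (fun y _ => pow_le_one₀ (hz0 y) (hz1 y))

lemma brwP_mono {z w : X → ℝ} (hz : ∀ y, 0 ≤ z y) (hzw : ∀ y, z y ≤ w y) (f : X →₀ ℕ) :
    brwP z f ≤ brwP w f :=
  Finset.prod_le_prod (fun y _ => pow_nonneg (hz y) _)
    (fun y _ => pow_le_pow_left₀ (hz y) (hzw y) _)

lemma brwP_one (f : X →₀ ℕ) : brwP (fun _ => (1:ℝ)) f = 1 := by
  simp [brwP]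

end Basic

section GBounds
variable {X : Type*} {μ : X → (X →₀ ℕ) → ℝ}
variable (hμ0 : ∀ x f, 0 ≤ μ x f) (hμ1 : ∀ x, ∑' f, μ x f = 1)
include hμ0 hμ1

lemma brw_term_summable (x : X) {z : X → ℝ} (hz0 : ∀ y, 0 ≤ z y) (hz1 : ∀ y, z y ≤ 1) :
    Summable (fun f => μ x f * brwP z f) :=
  Summable.of_nonneg_of_le
    (fun f => mul_nonneg (hμ0 x f) (brwP_nonneg hz0 f))
    (fun f => mul_le_of_le_one_right (hμ0 x f) (brwP_le_one hz0 hz1 f))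
    (brw_summable hμ0 hμ1 x)

lemma brwGF_nonneg (x : X) {z : X → ℝ} (hz0 : ∀ y, 0 ≤ z y) : 0 ≤ brwGF μ z x :=
  tsum_nonneg fun f => mul_nonneg (hμ0 x f) (brwP_nonneg hz0 f)

lemma brwGF_le_one (x : X) {z : X → ℝ} (hz0 : ∀ y, 0 ≤ z y) (hz1 : ∀ y, z y ≤ 1) :
    brwGF μ z x ≤ 1 := by
  rw [brwGF_eq, ← hμ1 x]
  exact Summable.tsum_le_tsum
    (fun f => mul_le_of_le_one_right (hμ0 x f) (brwP_le_one hz0 hz1 f))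
    (brw_term_summable hμ0 hμ1 x hz0 hz1) (brw_summable hμ0 hμ1 x)

lemma brwGF_mono (x : X) {z w : X → ℝ} (hz0 : ∀ y, 0 ≤ z y) (hzw : ∀ y, z y ≤ w y)
    (hw1 : ∀ y, w y ≤ 1) : brwGF μ z x ≤ brwGF μ w x := by
  have hw0 : ∀ y, 0 ≤ w y := fun y => le_trans (hz0 y) (hzw y)
  rw [brwGF_eq, brwGF_eq]
  exact Summable.tsum_le_tsum
    (fun f => mul_le_mul_of_nonneg_left (brwP_mono hz0 hzw f) (hμ0 x f))
    (brw_term_summable hμ0 hμ1 x hz0 (fun y => le_trans (hzw y) (hw1 y)))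
    (brw_term_summable hμ0 hμ1 x hw0 hw1)

lemma brwGF_one (x : X) : brwGF μ (fun _ => 1) x = 1 := by
  rw [brwGF_eq]
  simp only [brwP_one, mul_one]
  exact hμ1 x

end GBounds

-- convex combination product lemma (nonstrict)
lemma pow_convex_comb {a b l : ℝ} (ha : 0 ≤ a) (hab : a ≤ b) (hl0 : 0 ≤ l) (hl1 : l ≤ 1)
    (k : ℕ) : ((1 - l) * a + l * b) ^ k ≤ (1 - l) * a ^ k + l * b ^ k := by
  have hb : (0:ℝ) ≤ b := le_trans ha hab
  have := (convexOn_pow k).2 (Set.mem_Ici.2 ha) (Set.mem_Ici.2 hb)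
    (by linarith : (0:ℝ) ≤ 1 - l) hl0 (by ring)
  simpa [smul_eq_mul] using this

lemma prod_convex_comb {X : Type*} (s : Finset X) (k : X → ℕ) (a b : X → ℝ) (l : ℝ)
    (ha : ∀ y, 0 ≤ a y) (hab : ∀ y, a y ≤ b y) (hl0 : 0 ≤ l) (hl1 : l ≤ 1) :
    ∏ y ∈ s, ((1 - l) * a y + l * b y) ^ k y ≤
      (1 - l) * ∏ y ∈ s, a y ^ k y + l * ∏ y ∈ s, b y ^ k y := by
  classical
  induction s using Finset.induction_on with
  | empty => simp
  | @insert y s hy ih =>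
    rw [Finset.prod_insert hy, Finset.prod_insert hy, Finset.prod_insert hy]
    set A := ∏ x ∈ s, a x ^ k x with hA
    set B := ∏ x ∈ s, b x ^ k x with hB
    have hA0 : 0 ≤ A := Finset.prod_nonneg fun x _ => pow_nonneg (ha x) _
    have hAB : A ≤ B := Finset.prod_le_prod (fun x _ => pow_nonneg (ha x) _)
      (fun x _ => pow_le_pow_left₀ (ha x) (hab x) _)
    have hc0 : 0 ≤ ((1 - l) * a y + l * b y) ^ k y :=
      pow_nonneg (by nlinarith [ha y, le_trans (ha y) (hab y)]) _
    have hP0 : 0 ≤ ∏ x ∈ s, ((1 - l) * a x + l * b x) ^ k x :=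
      Finset.prod_nonneg fun x _ => pow_nonneg (by nlinarith [ha x, le_trans (ha x) (hab x)]) _
    have h1 : ((1 - l) * a y + l * b y) ^ k y * ∏ x ∈ s, ((1 - l) * a x + l * b x) ^ k x ≤
        ((1 - l) * a y ^ k y + l * b y ^ k y) * ((1 - l) * A + l * B) := by
      apply mul_le_mul (pow_convex_comb (ha y) (hab y) hl0 hl1 (k y)) ih hP0
      nlinarith [pow_nonneg (ha y) (k y), pow_nonneg (le_trans (ha y) (hab y)) (k y)]
    refine h1.trans ?_
    have hak : a y ^ k y ≤ b y ^ k y := pow_le_pow_left₀ (ha y) (hab y) _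
    have hak0 : 0 ≤ a y ^ k y := pow_nonneg (ha y) _
    nlinarith [mul_nonneg hl0 (sub_nonneg.2 hl1), sub_nonneg.2 hak, sub_nonneg.2 hAB,
      mul_nonneg (mul_nonneg hl0 (sub_nonneg.2 hl1)) (mul_nonneg (sub_nonneg.2 hak) (sub_nonneg.2 hAB))]

lemma combine_strict {Hc Ha Rc Ra l : ℝ} (h1 : Hc < (1 - l) * Ha + l)
    (h2 : Rc ≤ (1 - l) * Ra + l) (hHa0 : 0 ≤ Ha) (hHa1 : Ha ≤ 1)
    (hRa0 : 0 ≤ Ra) (hRa1 : Ra ≤ 1) (hRc : 0 < Rc)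
    (hl0 : 0 < l) (hl1 : l < 1) : Hc * Rc < (1 - l) * (Ha * Ra) + l := by
  have s1 : Hc * Rc < ((1 - l) * Ha + l) * Rc := by
    exact mul_lt_mul_of_pos_right h1 hRc
  have hm : (0:ℝ) ≤ (1 - l) * Ha + l := by nlinarith
  have s2 : ((1 - l) * Ha + l) * Rc ≤ ((1 - l) * Ha + l) * ((1 - l) * Ra + l) :=
    mul_le_mul_of_nonneg_left h2 hm
  have s3 : ((1 - l) * Ha + l) * ((1 - l) * Ra + l) ≤ (1 - l) * (Ha * Ra) + l := by
    nlinarith [mul_nonneg (mul_nonneg hl0.le (sub_nonneg.2 hl1.le))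
      (mul_nonneg (sub_nonneg.2 hHa1) (sub_nonneg.2 hRa1))]
  linarith

lemma prod_split1 {X : Type*} [DecidableEq X] (g : X → ℝ) (s : Finset X) {y : X}
    (h : y ∈ s) : ∏ x ∈ s, g x = g y * ∏ x ∈ s.erase y, g x :=
  (Finset.mul_prod_erase _ _ h).symm

lemma prod_split2 {X : Type*} [DecidableEq X] (g : X → ℝ) (s : Finset X) {y1 y2 : X}
    (h1 : y1 ∈ s) (h2 : y2 ∈ s.erase y1) :
    ∏ x ∈ s, g x = (g y1 * g y2) * ∏ x ∈ (s.erase y1).erase y2, g x := by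
  rw [← Finset.mul_prod_erase _ _ h1, ← Finset.mul_prod_erase _ _ h2, mul_assoc]

lemma prod_convex_comb_strict {X : Type*} (f : X →₀ ℕ) (a : X → ℝ) (l : ℝ)
    (ha0 : ∀ y, 0 ≤ a y) (ha1 : ∀ y, a y < 1) (hl0 : 0 < l) (hl1 : l < 1)
    (hdeg : 2 ≤ ∑ y ∈ f.support, f y) :
    ∏ y ∈ f.support, ((1 - l) * a y + l) ^ f y <
      (1 - l) * ∏ y ∈ f.support, a y ^ f y + l := by
  classical
  set c : X → ℝ := fun y => (1 - l) * a y + l with hc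
  have hc_pos : ∀ y, 0 < c y := fun y => by
    have := ha0 y; simp only [hc]; nlinarith
  have hrest : ∀ t : Finset X, ∏ y ∈ t, c y ^ f y ≤ (1 - l) * ∏ y ∈ t, a y ^ f y + l := by
    intro t
    have := prod_convex_comb t (fun y => f y) a (fun _ => 1) l ha0
      (fun y => (ha1 y).le) hl0.le hl1.le
    simpa using this
  have hrest_pos : ∀ t : Finset X, 0 < ∏ y ∈ t, c y ^ f y :=
    fun t => Finset.prod_pos fun y _ => pow_pos (hc_pos y) _
  have ha_pow01 : ∀ y (k : ℕ), 0 ≤ a y ^ k ∧ a y ^ k ≤ 1 :=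
    fun y k => ⟨pow_nonneg (ha0 y) _, pow_le_one₀ (ha0 y) (ha1 y).le⟩
  have hrest01 : ∀ t : Finset X, 0 ≤ ∏ y ∈ t, a y ^ f y ∧ ∏ y ∈ t, a y ^ f y ≤ 1 := by
    intro t
    exact ⟨Finset.prod_nonneg fun y _ => (ha_pow01 y _).1,
      Finset.prod_le_one (fun y _ => (ha_pow01 y _).1) (fun y _ => (ha_pow01 y _).2)⟩
  by_cases hbig : ∃ y ∈ f.support, 2 ≤ f y
  · obtain ⟨y, hy, hk⟩ := hbig
    rw [prod_split1 (fun x => c x ^ f x) _ hy, prod_split1 (fun x => a x ^ f x) _ hy]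
    have hhead : c y ^ f y < (1 - l) * a y ^ f y + l := by
      have h := (strictConvexOn_pow hk).2 (Set.mem_Ici.2 (ha0 y))
        (Set.mem_Ici.2 (zero_le_one)) (ha1 y).ne (by linarith : (0:ℝ) < 1 - l) hl0 (by ring)
      simpa [smul_eq_mul] using h
    exact combine_strict hhead (hrest _) (ha_pow01 y _).1 (ha_pow01 y _).2
      (hrest01 _).1 (hrest01 _).2 (hrest_pos _) hl0 hl1
  · push_neg at hbig
    have hone : ∀ y ∈ f.support, f y = 1 := by
      intro y hy
      have h1 : 1 ≤ f y := Nat.one_le_iff_ne_zero.2 (Finsupp.mem_support_iff.1 hy)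
      have h2 := hbig y hy
      omega
    have hcard : 2 ≤ f.support.card := by
      have : ∑ y ∈ f.support, f y = f.support.card := by
        rw [Finset.card_eq_sum_ones]
        exact Finset.sum_congr rfl hone
      omega
    obtain ⟨y1, hy1, y2, hy2, hne⟩ := (Finset.one_lt_card (s := f.support)).1 (by omega)
    have hy2' : y2 ∈ f.support.erase y1 := Finset.mem_erase.2 ⟨hne.symm, hy2⟩
    rw [prod_split2 (fun x => c x ^ f x) _ hy1 hy2', prod_split2 (fun x => a x ^ f x) _ hy1 hy2']
    have hf1 : f y1 = 1 := hone y1 hy1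
    have hf2 : f y2 = 1 := hone y2 hy2
    have hhead : c y1 ^ f y1 * c y2 ^ f y2 < (1 - l) * (a y1 ^ f y1 * a y2 ^ f y2) + l := by
      rw [hf1, hf2, pow_one, pow_one, pow_one, pow_one]
      simp only [hc]
      nlinarith [ha0 y1, ha0 y2, ha1 y1, ha1 y2,
        mul_pos (mul_pos hl0 (sub_pos.2 hl1)) (mul_pos (sub_pos.2 (ha1 y1)) (sub_pos.2 (ha1 y2)))]
    exact combine_strict hhead (hrest _)
      (mul_nonneg (ha_pow01 y1 _).1 (ha_pow01 y2 _).1)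
      (mul_le_one₀ (ha_pow01 y1 _).2 (ha_pow01 y2 _).1 (ha_pow01 y2 _).2)
      (hrest01 _).1 (hrest01 _).2 (hrest_pos _) hl0 hl1

section Iter
variable {X : Type*} {μ : X → (X →₀ ℕ) → ℝ} {qbar : X → ℝ}
variable (hμ0 : ∀ x f, 0 ≤ μ x f) (hμ1 : ∀ x, ∑' f, μ x f = 1)
variable (hqbar : ∀ x, Tendsto (fun n => (brwGF μ)^[n] (fun _ => 0) x) atTop (nhds (qbar x)))
include hμ0 hμ1

lemma brw_iter_mem (n : ℕ) (x : X) :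
    0 ≤ (brwGF μ)^[n] (fun _ => 0) x ∧ (brwGF μ)^[n] (fun _ => 0) x ≤ 1 := by
  induction n generalizing x with
  | zero => simp
  | succ n ih =>
    rw [Function.iterate_succ_apply']
    exact ⟨brwGF_nonneg hμ0 hμ1 x (fun y => (ih y).1),
      brwGF_le_one hμ0 hμ1 x (fun y => (ih y).1) (fun y => (ih y).2)⟩

lemma brw_iter_mono (n : ℕ) (x : X) :
    (brwGF μ)^[n] (fun _ => 0) x ≤ (brwGF μ)^[n+1] (fun _ => 0) x := by
  induction n generalizing x with
  | zero => simpa using brwGF_nonneg hμ0 hμ1 x (fun _ => le_refl 0)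
  | succ n ih =>
    rw [Function.iterate_succ_apply', Function.iterate_succ_apply']
    exact brwGF_mono hμ0 hμ1 x (fun y => (brw_iter_mem hμ0 hμ1 n y).1) ih
      (fun y => (brw_iter_mem hμ0 hμ1 (n+1) y).2)

include hqbar

lemma brw_iter_le_qbar (n : ℕ) (x : X) : (brwGF μ)^[n] (fun _ => 0) x ≤ qbar x :=
  Monotone.ge_of_tendsto (monotone_nat_of_le_succ (fun m => brw_iter_mono hμ0 hμ1 m x))
    (hqbar x) n

lemma brw_qbar_nonneg (x : X) : 0 ≤ qbar x :=
  le_trans (by simp) (brw_iter_le_qbar hμ0 hμ1 hqbar 0 x)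

lemma brw_qbar_le_one (x : X) : qbar x ≤ 1 :=
  le_of_tendsto (hqbar x) (Filter.Eventually.of_forall fun n => (brw_iter_mem hμ0 hμ1 n x).2)

lemma brw_qbar_le_GF (x : X) : qbar x ≤ brwGF μ qbar x := by
  have h1 : Tendsto (fun n => (brwGF μ)^[n+1] (fun _ => 0) x) atTop (nhds (qbar x)) :=
    (hqbar x).comp (Filter.tendsto_add_atTop_nat 1)
  refine le_of_tendsto h1 (Filter.Eventually.of_forall fun n => ?_)
  rw [Function.iterate_succ_apply']
  exact brwGF_mono hμ0 hμ1 x (fun y => (brw_iter_mem hμ0 hμ1 n y).1)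
    (fun y => brw_iter_le_qbar hμ0 hμ1 hqbar n y) (fun y => brw_qbar_le_one hμ0 hμ1 hqbar y)

lemma brw_GF_qbar_le (x : X) : brwGF μ qbar x ≤ qbar x := by
  rw [brwGF_eq]
  have hq0 := fun y => brw_qbar_nonneg hμ0 hμ1 hqbar y
  have hq1 := fun y => brw_qbar_le_one hμ0 hμ1 hqbar y
  refine Summable.tsum_le_of_sum_le (brw_term_summable hμ0 hμ1 x hq0 hq1) fun F => ?_
  have hlim : Tendsto (fun n => ∑ f ∈ F, μ x f * brwP ((brwGF μ)^[n] (fun _ => 0)) f)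
      atTop (nhds (∑ f ∈ F, μ x f * brwP qbar f)) := by
    refine tendsto_finset_sum F fun f _ => ?_
    refine Tendsto.const_mul _ ?_
    exact tendsto_finset_prod _ fun y _ => (hqbar y).pow _
  refine le_of_tendsto hlim (Filter.Eventually.of_forall fun n => ?_)
  calc ∑ f ∈ F, μ x f * brwP ((brwGF μ)^[n] (fun _ => 0)) f
      ≤ ∑' f, μ x f * brwP ((brwGF μ)^[n] (fun _ => 0)) f :=
        Summable.sum_le_tsum F (fun f _ => mul_nonneg (hμ0 x f)
          (brwP_nonneg (fun y => (brw_iter_mem hμ0 hμ1 n y).1) f))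
          (brw_term_summable hμ0 hμ1 x (fun y => (brw_iter_mem hμ0 hμ1 n y).1)
            (fun y => (brw_iter_mem hμ0 hμ1 n y).2))
    _ = (brwGF μ)^[n+1] (fun _ => 0) x := by
        rw [Function.iterate_succ_apply', brwGF_eq]
    _ ≤ qbar x := brw_iter_le_qbar hμ0 hμ1 hqbar (n+1) x

end Iter

lemma prod_split1' {X : Type*} [DecidableEq X] (g : X → ℝ) (s : Finset X) {y : X}
    (h : y ∈ s) : ∏ x ∈ s, g x = g y * ∏ x ∈ s.erase y, g x :=
  (Finset.mul_prod_erase _ _ h).symm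

section Prop4
variable {X : Type*} {μ : X → (X →₀ ℕ) → ℝ}
variable (hμ0 : ∀ x f, 0 ≤ μ x f) (hμ1 : ∀ x, ∑' f, μ x f = 1)
include hμ0

lemma exists_support_of_M_pos {x w : X} (h : 0 < brwM μ x w) :
    ∃ f, 0 < μ x f ∧ 0 < f w := by
  by_contra hno
  push_neg at hno
  have hz : ∀ f : X →₀ ℕ, μ x f * (f w : ℝ) = 0 := by
    intro f
    rcases lt_or_eq_of_le (hμ0 x f) with hpos | heq
    · have := hno f hpos
      simp [Nat.le_zero.1 this]
    · rw [← heq, zero_mul]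
  have : brwM μ x w = 0 := by
    unfold brwM
    rw [tsum_congr hz, tsum_zero]
  rw [this] at h
  exact lt_irrefl 0 h

include hμ1

lemma brwGF_lt_one {wv : X → ℝ} (hw0 : ∀ y, 0 ≤ wv y) (hw1 : ∀ y, wv y ≤ 1)
    {x c : X} (hc : wv c < 1) {f0 : X →₀ ℕ} (hf0 : 0 < μ x f0) (hfc : 0 < f0 c) :
    brwGF μ wv x < 1 := by
  classical
  have hcsupp : c ∈ f0.support := Finsupp.mem_support_iff.2 (Nat.pos_iff_ne_zero.1 hfc)
  have hP : brwP wv f0 < 1 := by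
    unfold brwP
    rw [prod_split1' _ _ hcsupp]
    have h1 : wv c ^ f0 c ≤ wv c :=
      pow_le_of_le_one (hw0 c) (hw1 c) (Nat.pos_iff_ne_zero.1 hfc)
    have h2 : ∏ y ∈ f0.support.erase c, wv y ^ f0 y ≤ 1 :=
      Finset.prod_le_one (fun y _ => pow_nonneg (hw0 y) _)
        (fun y _ => pow_le_one₀ (hw0 y) (hw1 y))
    have h3 : 0 ≤ ∏ y ∈ f0.support.erase c, wv y ^ f0 y :=
      Finset.prod_nonneg fun y _ => pow_nonneg (hw0 y) _
    calc wv c ^ f0 c * ∏ y ∈ f0.support.erase c, wv y ^ f0 y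
        ≤ wv c * 1 := mul_le_mul h1 h2 h3 (hw0 c)
      _ < 1 := by rw [mul_one]; exact hc
  rw [brwGF_eq, ← hμ1 x]
  refine Summable.tsum_lt_tsum (i := f0) (fun f => mul_le_of_le_one_right (hμ0 x f)
    (brwP_le_one hw0 hw1 f)) ?_ (brw_term_summable hμ0 hμ1 x hw0 hw1) (brw_summable hμ0 hμ1 x)
  nlinarith [hf0, hP]

lemma brw_propagate (hirr : ∀ x y : X, brwReach μ x y) {wv : X → ℝ}
    (hw0 : ∀ y, 0 ≤ wv y) (hw1 : ∀ y, wv y ≤ 1)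
    (hGw : ∀ x, wv x ≤ brwGF μ wv x) {x0 : X} (hx0 : wv x0 < 1) (x : X) : wv x < 1 := by
  have hreach : brwReach μ x x0 := hirr x x0
  induction hreach using Relation.ReflTransGen.head_induction_on with
  | refl => exact hx0
  | head h' _ ih =>
    rename_i a c _
    obtain ⟨f0, hf0, hfc⟩ := exists_support_of_M_pos hμ0 h'
    exact lt_of_le_of_lt (hGw a) (brwGF_lt_one hμ0 hμ1 hw0 hw1 ih hf0 hfc)
end Prop4

lemma finsupp_eq_zero_of_sum_eq_zero {X : Type*} {f : X →₀ ℕ}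
    (h : ∑ y ∈ f.support, f y = 0) : f = 0 := by
  have := Finset.sum_eq_zero_iff.1 h
  refine Finsupp.support_eq_empty.1 ?_
  by_contra hne
  obtain ⟨y, hy⟩ := Finset.nonempty_iff_ne_empty.2 hne
  exact (Finsupp.mem_support_iff.1 hy) (this y hy)

lemma finsupp_single_of_sum_eq_one {X : Type*} {f : X →₀ ℕ}
    (h : ∑ y ∈ f.support, f y = 1) : ∃ w, f.support = {w} ∧ f w = 1 := by
  have hne : f.support.Nonempty := by
    by_contra hn
    rw [Finset.not_nonempty_iff_eq_empty.1 hn] at h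
    simp at h
  obtain ⟨w, hw⟩ := hne
  have hcard : f.support.card = 1 := by
    have h1 : ∀ y ∈ f.support, 1 ≤ f y :=
      fun y hy => Nat.one_le_iff_ne_zero.2 (Finsupp.mem_support_iff.1 hy)
    have h2 : f.support.card ≤ ∑ y ∈ f.support, f y := by
      rw [Finset.card_eq_sum_ones]
      exact Finset.sum_le_sum h1
    have h3 : 1 ≤ f.support.card := Finset.card_pos.2 ⟨w, hw⟩
    omega
  obtain ⟨w0, hw0⟩ := Finset.card_eq_one.1 hcard
  refine ⟨w0, hw0, ?_⟩
  rw [hw0] at h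
  simpa using h

lemma brwP_of_single {X : Type*} {f : X →₀ ℕ} {w : X} (hs : f.support = {w}) (h1 : f w = 1)
    (a : X → ℝ) : brwP a f = a w := by
  unfold brwP
  rw [hs]
  simp [h1]

section Degenerate
variable {X : Type*} [Fintype X] {μ : X → (X →₀ ℕ) → ℝ} {qbar : X → ℝ}
variable (hμ0 : ∀ x f, 0 ≤ μ x f) (hμ1 : ∀ x, ∑' f, μ x f = 1)
variable (hfix : ∀ x, brwGF μ qbar x = qbar x)
variable (hq0 : ∀ x, 0 ≤ qbar x) (hq1 : ∀ x, qbar x < 1)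
variable (hdeg : ∀ x f, 0 < μ x f → (∑ y ∈ f.support, f y) ≤ 1)
include hμ0 hμ1 hfix hq0 hq1 hdeg

lemma brw_degenerate_contra
    (hirr : ∀ x y : X, Relation.ReflTransGen (fun a b => 0 < brwM μ a b) x y)
    {y : X} (hy : 0 < μ y 0) : False := by
  classical
  set u : X → ℝ := fun x => 1 - qbar x with hu
  have hu_pos : ∀ x, 0 < u x := fun x => by simp only [hu]; linarith [hq1 x]
  -- the key identity
  have hsummP : ∀ x, Summable (fun f => μ x f * brwP qbar f) :=
    fun x => brw_term_summable hμ0 hμ1 x hq0 (fun w => (hq1 w).le)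
  have hkey : ∀ x, u x = ∑' f, μ x f * (1 - brwP qbar f) := by
    intro x
    have : ∀ f : X →₀ ℕ, μ x f * (1 - brwP qbar f) = μ x f - μ x f * brwP qbar f :=
      fun f => by ring
    have h2 : (∑' f, μ x f * brwP qbar f) = qbar x := (brwGF_eq μ qbar x).symm.trans (hfix x)
    rw [tsum_congr this, Summable.tsum_sub (brw_summable hμ0 hμ1 x) (hsummP x), hμ1 x, h2]
  -- termwise bound
  have hterm : ∀ (x : X) (M : ℝ), (∀ w, u w ≤ M) → ∀ f,
      μ x f * (1 - brwP qbar f) ≤ M * μ x f := by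
    intro x M hM f
    rcases lt_or_eq_of_le (hμ0 x f) with hpos | heq
    · have hMpos : 0 < M := lt_of_lt_of_le (hu_pos x) (hM x)
      rcases Nat.le_one_iff_eq_zero_or_eq_one.1 (hdeg x f hpos) with h0 | h1
      · have hf0 : f = 0 := finsupp_eq_zero_of_sum_eq_zero h0
        subst hf0
        have : brwP qbar (0 : X →₀ ℕ) = 1 := by simp [brwP]
        rw [this]
        nlinarith
      · obtain ⟨w, hs, h1'⟩ := finsupp_single_of_sum_eq_one h1
        rw [brwP_of_single hs h1']
        have := hM w
        have huw : u w = 1 - qbar w := rfl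
        nlinarith
    · rw [← heq]; ring_nf; exact le_refl 0
  -- strict comparison machinery
  have hstrict : ∀ (x : X) (M : ℝ), (∀ w, u w ≤ M) → ∀ f0 : X →₀ ℕ,
      μ x f0 * (1 - brwP qbar f0) < M * μ x f0 → u x < M := by
    intro x M hM f0 hf0
    have hDsumm : Summable (fun f => μ x f * (1 - brwP qbar f)) := by
      have : ∀ f : X →₀ ℕ, μ x f * (1 - brwP qbar f) = μ x f - μ x f * brwP qbar f :=
        fun f => by ring
      rw [funext this]
      exact (brw_summable hμ0 hμ1 x).sub (hsummP x)
    have hEsumm : Summable (fun f => M * μ x f) := (brw_summable hμ0 hμ1 x).mul_left M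
    have h := Summable.tsum_lt_tsum (hterm x M hM) hf0 hDsumm hEsumm
    rw [← hkey x] at h
    calc u x < ∑' f, M * μ x f := h
      _ = M := by rw [tsum_mul_left, hμ1 x, mul_one]
  -- the maximum of u
  obtain ⟨x0, _, hx0⟩ := Finset.exists_max_image Finset.univ u ⟨y, Finset.mem_univ y⟩
  set M := u x0 with hM
  have hMub : ∀ w, u w ≤ M := fun w => hx0 w (Finset.mem_univ w)
  have hMpos : 0 < M := hu_pos x0
  -- closure of the argmax set under edges
  have hclosure : ∀ x w, u x = M → 0 < brwM μ x w → u w = M := by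
    intro x w hx hMxw
    by_contra hne
    have huw : u w < M := lt_of_le_of_ne (hMub w) hne
    obtain ⟨f0, hf0, hfw⟩ := exists_support_of_M_pos hμ0 hMxw
    have hwsupp : w ∈ f0.support := Finsupp.mem_support_iff.2 (Nat.pos_iff_ne_zero.1 hfw)
    have hd1 : ∑ v ∈ f0.support, f0 v = 1 := by
      have hge : 1 ≤ ∑ v ∈ f0.support, f0 v :=
        le_trans hfw (Finset.single_le_sum (fun v _ => Nat.zero_le _) hwsupp)
      have := hdeg x f0 hf0
      omega
    obtain ⟨w0, hs, h1'⟩ := finsupp_single_of_sum_eq_one hd1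
    have hww : w = w0 := by
      have := hs ▸ hwsupp
      simpa using this
    subst hww
    have hPs : brwP qbar f0 = qbar w := brwP_of_single hs h1' qbar
    have hlt : μ x f0 * (1 - brwP qbar f0) < M * μ x f0 := by
      rw [hPs]
      have : u w = 1 - qbar w := rfl
      nlinarith
    exact absurd hx (ne_of_lt (hstrict x M hMub f0 hlt))
  -- propagate from x0 to y
  have huy : u y = M := by
    have hr := hirr x0 y
    clear hy
    induction hr with
    | refl => rfl
    | tail hab hbc ih => exact hclosure _ _ ih hbc
  -- contradiction at y using death probability
  have h0supp : brwP qbar (0 : X →₀ ℕ) = 1 := by simp [brwP]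
  have hlt : μ y (0 : X →₀ ℕ) * (1 - brwP qbar (0 : X →₀ ℕ)) < M * μ y 0 := by
    rw [h0supp]
    nlinarith
  exact absurd huy (ne_of_lt (hstrict y M hMub 0 hlt))

end Degenerate

section Convex
variable {X : Type*} {μ : X → (X →₀ ℕ) → ℝ}
variable (hμ0 : ∀ x f, 0 ≤ μ x f) (hμ1 : ∀ x, ∑' f, μ x f = 1)
include hμ0 hμ1

lemma brwGF_convex_comb (x : X) {a b : X → ℝ} {l : ℝ}
    (ha0 : ∀ y, 0 ≤ a y) (hab : ∀ y, a y ≤ b y) (hb1 : ∀ y, b y ≤ 1)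
    (hl0 : 0 ≤ l) (hl1 : l ≤ 1) :
    brwGF μ (fun y => (1 - l) * a y + l * b y) x ≤
      (1 - l) * brwGF μ a x + l * brwGF μ b x := by
  have ha1 : ∀ y, a y ≤ 1 := fun y => le_trans (hab y) (hb1 y)
  have hb0 : ∀ y, 0 ≤ b y := fun y => le_trans (ha0 y) (hab y)
  have hc0 : ∀ y, 0 ≤ (1 - l) * a y + l * b y := fun y => by nlinarith [ha0 y, hb0 y]
  have hc1 : ∀ y, (1 - l) * a y + l * b y ≤ 1 := fun y => by nlinarith [ha1 y, hb1 y]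
  have hsa := brw_term_summable hμ0 hμ1 x ha0 ha1
  have hsb := brw_term_summable hμ0 hμ1 x hb0 hb1
  rw [brwGF_eq, brwGF_eq, brwGF_eq]
  have hsum2 : Summable (fun f => (1-l) * (μ x f * brwP a f) + l * (μ x f * brwP b f)) :=
    (hsa.mul_left _).add (hsb.mul_left _)
  calc ∑' f, μ x f * brwP (fun y => (1 - l) * a y + l * b y) f
      ≤ ∑' f, ((1-l) * (μ x f * brwP a f) + l * (μ x f * brwP b f)) := by
        refine Summable.tsum_le_tsum (fun f => ?_) (brw_term_summable hμ0 hμ1 x hc0 hc1) hsum2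
        have hP := prod_convex_comb f.support (fun y => f y) a b l ha0 hab hl0 hl1
        have h0 := hμ0 x f
        unfold brwP
        nlinarith [hP]
    _ = (1-l) * ∑' f, μ x f * brwP a f + l * ∑' f, μ x f * brwP b f := by
        rw [Summable.tsum_add (hsa.mul_left _) (hsb.mul_left _), tsum_mul_left, tsum_mul_left]

lemma brwGF_strict (x : X) {a : X → ℝ} {l : ℝ}
    (ha0 : ∀ y, 0 ≤ a y) (ha1 : ∀ y, a y < 1) (hl0 : 0 < l) (hl1 : l < 1)
    {f0 : X →₀ ℕ} (hf0 : 0 < μ x f0) (hdeg : 2 ≤ ∑ y ∈ f0.support, f0 y) :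
    brwGF μ (fun y => (1 - l) * a y + l) x < (1 - l) * brwGF μ a x + l := by
  have ha1' : ∀ y, a y ≤ 1 := fun y => (ha1 y).le
  have hc0 : ∀ y, 0 ≤ (1 - l) * a y + l := fun y => by nlinarith [ha0 y]
  have hc1 : ∀ y, (1 - l) * a y + l ≤ 1 := fun y => by nlinarith [ha1' y]
  have hsa := brw_term_summable hμ0 hμ1 x ha0 ha1'
  have hsum2 : Summable (fun f => (1-l) * (μ x f * brwP a f) + l * μ x f) :=
    (hsa.mul_left _).add ((brw_summable hμ0 hμ1 x).mul_left _)
  rw [brwGF_eq, brwGF_eq]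
  calc ∑' f, μ x f * brwP (fun y => (1 - l) * a y + l) f
      < ∑' f, ((1-l) * (μ x f * brwP a f) + l * μ x f) := by
        refine Summable.tsum_lt_tsum (i := f0) (fun f => ?_) ?_
          (brw_term_summable hμ0 hμ1 x hc0 hc1) hsum2
        · have hP : brwP (fun y => (1 - l) * a y + l) f ≤ (1-l) * brwP a f + l * 1 := by
            have := prod_convex_comb f.support (fun y => f y) a (fun _ => 1) l ha0 ha1'
              hl0.le hl1.le
            simpa [brwP] using this
          have h0 := hμ0 x f
          nlinarith [hP]
        · have hP := prod_convex_comb_strict f0 a l ha0 ha1 hl0 hl1 hdeg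
          have h1 : brwP (fun y => (1 - l) * a y + l) f0 < (1-l) * brwP a f0 + l := by
            simpa [brwP] using hP
          nlinarith [h1, hf0]
    _ = (1-l) * ∑' f, μ x f * brwP a f + l * ∑' f, μ x f := by
        rw [Summable.tsum_add (hsa.mul_left _) ((brw_summable hμ0 hμ1 x).mul_left _),
          tsum_mul_left, tsum_mul_left]
    _ = (1-l) * brwGF μ a x + l := by rw [hμ1 x, brwGF_eq, mul_one]

end Convex

/-- Corollary 3.5: for an irreducible BRW on a finite set, the only solutions of
`G(z) ≥ z` with `z ≥ q̄` are `q̄` and `1`. -/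
theorem brw_finite_irreducible_two_solutions
    {X : Type*} [Fintype X] (μ : X → (X →₀ ℕ) → ℝ)
    (hμ0 : ∀ x f, 0 ≤ μ x f) (hμ1 : ∀ x, ∑' f, μ x f = 1)
    (hirr : ∀ x y : X, brwReach μ x y)
    (hass : brwAssumption1 μ)
    (qbar : X → ℝ)
    (hqbar : ∀ x, Tendsto (fun n => (brwGF μ)^[n] (fun _ => 0) x) atTop (nhds (qbar x)))
    (z : X → ℝ) (hz01 : ∀ x, z x ∈ Set.Icc (0 : ℝ) 1)
    (hzq : ∀ x, qbar x ≤ z x)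
    (hGz : ∀ x, z x ≤ brwGF μ z x) :
    z = qbar ∨ z = fun _ => 1 := by
  classical
  have hz0 : ∀ x, 0 ≤ z x := fun x => (hz01 x).1
  have hz1 : ∀ x, z x ≤ 1 := fun x => (hz01 x).2
  rcases isEmpty_or_nonempty X with hE | hNE
  · left; funext x; exact (hE.false x).elim
  by_cases hzone : ∀ x, z x = (1:ℝ)
  · right; funext x; exact hzone x
  left
  push_neg at hzone
  obtain ⟨xw, hxw⟩ := hzone
  have hxw' : z xw < 1 := lt_of_le_of_ne (hz1 xw) hxw
  have hzlt : ∀ x, z x < 1 := brw_propagate hμ0 hμ1 hirr hz0 hz1 hGz hxw'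
  have hq0 : ∀ x, 0 ≤ qbar x := brw_qbar_nonneg hμ0 hμ1 hqbar
  have hq1' : ∀ x, qbar x ≤ 1 := brw_qbar_le_one hμ0 hμ1 hqbar
  have hqlt : ∀ x, qbar x < 1 := fun x => lt_of_le_of_lt (hzq x) (hzlt x)
  have hGq_le : ∀ x, brwGF μ qbar x ≤ qbar x := brw_GF_qbar_le hμ0 hμ1 hqbar
  have hGq_ge : ∀ x, qbar x ≤ brwGF μ qbar x := brw_qbar_le_GF hμ0 hμ1 hqbar
  by_contra hne
  have hex : ∃ x1, qbar x1 < z x1 := by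
    by_contra h
    push_neg at h
    exact hne (funext fun x => le_antisymm (h x) (hzq x))
  -- the direction vector
  set v : X → ℝ := fun x => z x - qbar x with hv
  have hv0 : ∀ x, 0 ≤ v x := fun x => sub_nonneg.2 (hzq x)
  obtain ⟨x1, hx1⟩ := hex
  set T : Finset X := Finset.univ.filter (fun x => 0 < v x) with hT
  have hTne : T.Nonempty := ⟨x1, Finset.mem_filter.2 ⟨Finset.mem_univ _, sub_pos.2 hx1⟩⟩
  set ts : ℝ := T.inf' hTne (fun x => (1 - qbar x) / v x) with hts
  have hts1 : 1 < ts := by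
    rw [hts, Finset.lt_inf'_iff]
    intro x hx
    have hvx : 0 < v x := (Finset.mem_filter.1 hx).2
    rw [lt_div_iff₀ hvx, one_mul]
    have := hzlt x
    simp only [hv]
    linarith
  have hts0 : 0 < ts := lt_trans one_pos hts1
  obtain ⟨xs, hxsT, hxs⟩ := Finset.exists_mem_eq_inf' hTne (fun x => (1 - qbar x) / v x)
  have hvxs : 0 < v xs := (Finset.mem_filter.1 hxsT).2
  rw [← hts] at hxs
  set ys : X → ℝ := fun x => qbar x + ts * v x with hys
  have hys_le1 : ∀ x, ys x ≤ 1 := by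
    intro x
    by_cases hx : x ∈ T
    · have hvx : 0 < v x := (Finset.mem_filter.1 hx).2
      have h1 : ts ≤ (1 - qbar x) / v x := hts ▸ Finset.inf'_le _ hx
      have := (le_div_iff₀ hvx).1 h1
      simp only [hys]
      linarith
    · have hvx : v x = 0 := by
        have : ¬ 0 < v x := fun h => hx (Finset.mem_filter.2 ⟨Finset.mem_univ _, h⟩)
        linarith [hv0 x, this]
      simp only [hys, hvx, mul_zero, add_zero]
      exact (hqlt x).le
  have hys0 : ∀ x, 0 ≤ ys x :=
    fun x => add_nonneg (hq0 x) (mul_nonneg hts0.le (hv0 x))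
  have hysxs : ys xs = 1 := by
    simp only [hys]
    rw [hxs, div_mul_cancel₀ _ (ne_of_gt hvxs)]
    ring
  set l : ℝ := 1 / ts with hl
  have hl0 : 0 < l := by positivity
  have hl1 : l < 1 := by rw [hl, div_lt_one hts0]; exact hts1
  have hq_le_ys : ∀ x, qbar x ≤ ys x :=
    fun x => le_add_of_nonneg_right (mul_nonneg hts0.le (hv0 x))
  have hcomb : (fun y => (1 - l) * qbar y + l * ys y) = z := by
    funext x
    simp only [hys, hl, hv]
    field_simp
    ring
  -- y* is a super-solution
  have hGys : ∀ x, ys x ≤ brwGF μ ys x := by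
    intro x
    have hcv := brwGF_convex_comb hμ0 hμ1 x hq0 hq_le_ys hys_le1 hl0.le hl1.le
    rw [hcomb] at hcv
    have h1 : z x ≤ (1 - l) * qbar x + l * brwGF μ ys x := by
      calc z x ≤ brwGF μ z x := hGz x
        _ ≤ (1 - l) * brwGF μ qbar x + l * brwGF μ ys x := hcv
        _ ≤ (1 - l) * qbar x + l * brwGF μ ys x := by nlinarith [hGq_le x]
    have h2 : z x = (1 - l) * qbar x + l * ys x := (congrFun hcomb x).symm
    nlinarith
  -- hence y* = 1 everywhere
  have hys_one : ∀ x, ys x = 1 := by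
    intro x
    by_contra hlt
    have h1 : ys x < 1 := lt_of_le_of_ne (hys_le1 x) hlt
    have := brw_propagate hμ0 hμ1 hirr hys0 hys_le1 hGys h1 xs
    rw [hysxs] at this
    exact lt_irrefl 1 this
  -- so z = (1-l) q̄ + l 1
  have hz_eq : z = fun y => (1 - l) * qbar y + l := by
    funext x
    have h1 : qbar x + ts * v x = 1 := hys_one x
    have h2 : z x = qbar x + v x := by simp [hv]
    have h3 : v x = (1 - qbar x) * l := by
      rw [hl]
      field_simp
      linarith
    rw [h2, h3]
    ring
  by_cases hbig : ∃ x f, 0 < μ x f ∧ 2 ≤ ∑ y ∈ f.support, f y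
  · obtain ⟨x, f0, hf0, hd⟩ := hbig
    have hstrict := brwGF_strict hμ0 hμ1 x hq0 hqlt hl0 hl1 hf0 hd
    rw [← hz_eq] at hstrict
    have h1 : z x ≤ brwGF μ z x := hGz x
    have h2 : z x = (1 - l) * qbar x + l := congrFun hz_eq x
    nlinarith [hGq_le x]
  · push_neg at hbig
    have hdeg : ∀ x f, 0 < μ x f → (∑ y ∈ f.support, f y) ≤ 1 := by
      intro x f hf
      have := hbig x f hf
      omega
    -- extract the death vertex from Assumption 1
    obtain ⟨yv, _, hylt⟩ := hass xs
    set s : Set (X →₀ ℕ) :=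
      {f | (∑ w ∈ f.support, if brwComm μ w yv then f w else 0) = 1} with hsdef
    have hsplit := Summable.tsum_add_tsum_compl (s := s)
      ((brw_summable hμ0 hμ1 yv).subtype s) ((brw_summable hμ0 hμ1 yv).subtype sᶜ)
    rw [hμ1 yv] at hsplit
    have hcompl_pos : 0 < ∑' (f : ↥sᶜ), μ yv ↑f := by
      have h1 : (∑' (f : ↥s), μ yv ↑f) < 1 := hylt
      linarith
    have hf1 : ∃ f : ↥sᶜ, 0 < μ yv ↑f := by
      by_contra hno
      push_neg at hno
      have : ∀ f : ↥sᶜ, μ yv ↑f = 0 :=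
        fun f => le_antisymm (hno f) (hμ0 yv _)
      rw [tsum_congr this, tsum_zero] at hcompl_pos
      exact lt_irrefl 0 hcompl_pos
    obtain ⟨⟨f1, hf1c⟩, hf1pos⟩ := hf1
    have hsum_eq : (∑ w ∈ f1.support, if brwComm μ w yv then f1 w else 0)
        = ∑ w ∈ f1.support, f1 w :=
      Finset.sum_congr rfl fun w _ => if_pos ⟨hirr w yv, hirr yv w⟩
    have hne1 : ∑ w ∈ f1.support, f1 w ≠ 1 := by
      intro h
      exact hf1c (by rw [Set.mem_setOf_eq, hsum_eq, h])
    have hle1 : ∑ w ∈ f1.support, f1 w ≤ 1 := hdeg yv f1 hf1pos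
    have hf1pos' : 0 < μ yv f1 := hf1pos
    have hzero : f1 = 0 := finsupp_eq_zero_of_sum_eq_zero (by omega)
    rw [hzero] at hf1pos'
    have hfix : ∀ x, brwGF μ qbar x = qbar x :=
      fun x => le_antisymm (hGq_le x) (hGq_ge x)
    exact brw_degenerate_contra hμ0 hμ1 hfix hq0 hqlt hdeg hirr hf1pos'
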